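/- arXiv:1105.3153 — 3 statements merged into one kernel-verified Lean document; each statement's English description precedes it below -/
import Mathlib

section
/- On the unit 2-sphere S², if f ∈ E_{λ_l} and h ∈ E_{λ_r} are Laplace eigenfunctions with eigenvalues λ_l = l(l+1) and λ_r = r(r+1), then Δ⟨J∇f, ∇h⟩ = −(λ_l + λ_r − 2)⟨J∇f, ∇h⟩ − 2 Σ_{i,j} Hess f(e_i, Je_j) Hess h(e_i, e_j) for any local orthonormal frame (e_i). -/
open MeasureTheory Real
open scoped RealInnerProductSpace

noncomputable section

/-- Euclidean 3-space. -/
abbrev E3 := EuclideanSpace ℝ (Fin 3)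

/-- The unit 2-sphere `S² ⊂ ℝ³` as a subset. -/
def Sph : Set E3 := Metric.sphere (0 : E3) 1

/-- The round surface measure on the unit 2-sphere. -/
def μS : Measure (Metric.sphere (0 : E3) 1) := (volume : Measure E3).toSphere

/-- The Riemannian gradient on the unit sphere, computed extrinsically: the Euclidean
gradient of the degree-zero homogeneous extension of `F` (which is automatically
tangent to the sphere). -/
def sgrad {n : ℕ} (F : EuclideanSpace ℝ (Fin n) → ℝ) (x : EuclideanSpace ℝ (Fin n)) :
    EuclideanSpace ℝ (Fin n) :=
  gradient (fun y => F (‖y‖⁻¹ • y)) x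

/-- The Euclidean Laplacian. -/
def elap {n : ℕ} (F : EuclideanSpace ℝ (Fin n) → ℝ) (x : EuclideanSpace ℝ (Fin n)) : ℝ :=
  ∑ i, fderiv ℝ (fun y => fderiv ℝ F y (EuclideanSpace.single i 1)) x
    (EuclideanSpace.single i 1)

/-- The Laplace–Beltrami operator on the unit sphere, computed extrinsically as the
Euclidean Laplacian of the degree-zero homogeneous extension. -/
def slap {n : ℕ} (F : EuclideanSpace ℝ (Fin n) → ℝ) (x : EuclideanSpace ℝ (Fin n)) : ℝ :=
  elap (fun y => F (‖y‖⁻¹ • y)) x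

/-- The Riemannian Hessian on the unit sphere, evaluated on tangent vectors `v, w`:
the derivative of the (extended, tangential) gradient field. -/
def shess {n : ℕ} (F : EuclideanSpace ℝ (Fin n) → ℝ) (x v w : EuclideanSpace ℝ (Fin n)) :
    ℝ :=
  ⟪fderiv ℝ (sgrad F) x v, w⟫

/-- The cross product on `ℝ³`. -/
def cross3 (x v : E3) : E3 :=
  (WithLp.equiv 2 (Fin 3 → ℝ)).symm
    ![x 1 * v 2 - x 2 * v 1, x 2 * v 0 - x 0 * v 2, x 0 * v 1 - x 1 * v 0]

/-- The standard complex structure of `S²` at a point `x`: rotation by `π/2` of the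
tangent plane `x^⊥`, given by `v ↦ x × v`. -/
def Jop (x v : E3) : E3 := cross3 x v

def uv (i : Fin 3) : E3 := EuclideanSpace.single i 1
def U3 : Set E3 := {y : E3 | y ≠ 0}
def D (i : Fin 3) (f : E3 → ℝ) : E3 → ℝ := fun y => fderiv ℝ f y (uv i)
def Sm (f : E3 → ℝ) : Prop := ContDiffOn ℝ (⊤ : ℕ∞) f U3

lemma U3_open : IsOpen U3 := isOpen_ne
lemma U3_mem {x : E3} (hx : x ≠ 0) : x ∈ U3 := hx
lemma U3_nhds {x : E3} (hx : x ∈ U3) : U3 ∈ nhds x := U3_open.mem_nhds hx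

lemma Sm.contDiffAt {f : E3 → ℝ} (hf : Sm f) {x : E3} (hx : x ∈ U3) : ContDiffAt ℝ (⊤ : ℕ∞) f x :=
  (hf.contDiffWithinAt hx).contDiffAt (U3_nhds hx)

lemma Sm.diffAt {f : E3 → ℝ} (hf : Sm f) {x : E3} (hx : x ∈ U3) : DifferentiableAt ℝ f x :=
  (hf.contDiffAt hx).differentiableAt (by simp)

lemma Sm.D {f : E3 → ℝ} (hf : Sm f) (i : Fin 3) : Sm (D i f) := by
  have h1 : ContDiffOn ℝ (⊤ : ℕ∞) (fderiv ℝ f) U3 := hf.fderiv_of_isOpen U3_open (by simp)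
  have h2 : ContDiffOn ℝ (⊤ : ℕ∞) (fun L : E3 →L[ℝ] ℝ => L (uv i)) Set.univ :=
    (ContinuousLinearMap.apply ℝ ℝ (uv i)).contDiff.contDiffOn
  exact (h2.comp h1 (Set.mapsTo_univ _ _) : ContDiffOn ℝ (⊤ : ℕ∞) _ U3)

-- eventual equality from equality on U3
lemma eqOn_nhds {f g : E3 → ℝ} {x : E3} (hx : x ∈ U3) (h : ∀ y ∈ U3, f y = g y) :
    f =ᶠ[nhds x] g := Filter.eventuallyEq_of_mem (U3_nhds hx) h

lemma D_congr {f g : E3 → ℝ} {x : E3} (hx : x ∈ U3) (h : ∀ y ∈ U3, f y = g y) (i : Fin 3) :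
    D i f x = D i g x := by
  unfold D; rw [(eqOn_nhds hx h).fderiv_eq]

lemma D_mul {f g : E3 → ℝ} {x : E3} (hf : DifferentiableAt ℝ f x)
    (hg : DifferentiableAt ℝ g x) (i : Fin 3) :
    D i (fun y => f y * g y) x = D i f x * g x + f x * D i g x := by
  unfold D; rw [fderiv_fun_mul hf hg]; simp; ring

lemma D_add {f g : E3 → ℝ} {x : E3} (hf : DifferentiableAt ℝ f x)
    (hg : DifferentiableAt ℝ g x) (i : Fin 3) :
    D i (fun y => f y + g y) x = D i f x + D i g x := by
  unfold D; rw [fderiv_fun_add hf hg]; simp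

lemma D_const_mul {f : E3 → ℝ} {x : E3} (hf : DifferentiableAt ℝ f x) (c : ℝ) (i : Fin 3) :
    D i (fun y => c * f y) x = c * D i f x := by
  unfold D; rw [fderiv_const_mul hf]; simp

-- Schwarz
lemma schwarz {f : E3 → ℝ} (hf : Sm f) {x : E3} (hx : x ∈ U3) (i j : Fin 3) :
    D i (D j f) x = D j (D i f) x := by
  have hs : IsSymmSndFDerivAt ℝ f x := (hf.contDiffAt hx).isSymmSndFDerivAt (by rw [minSmoothness_of_isRCLikeNormedField]; exact WithTop.coe_le_coe.mpr le_top)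
  have key : ∀ v w : E3, fderiv ℝ (fun y => fderiv ℝ f y w) x v = fderiv ℝ (fderiv ℝ f) x v w := by
    intro v w
    have hd : DifferentiableAt ℝ (fderiv ℝ f) x := by
      have := ((hf.fderiv_of_isOpen (m := (⊤ : ℕ∞)) U3_open (by simp)).contDiffWithinAt hx)
      exact ((this.contDiffAt (U3_nhds hx)).differentiableAt (by simp))
    rw [fderiv_clm_apply hd (differentiableAt_const w)]
    simp
  unfold D
  rw [key, key, hs (uv i) (uv j)]

-- Part 1: the radial retraction
def Nr : E3 → E3 := fun y => ‖y‖⁻¹ • y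

lemma Sm_comp_Nr {F : E3 → ℝ} (hF : ContDiff ℝ (⊤ : ℕ∞) F) : Sm (fun y => F (Nr y)) := by
  intro y hy
  have h1 : ContDiffAt ℝ (⊤ : ℕ∞) Nr y := by
    have hn : ContDiffAt ℝ (⊤ : ℕ∞) (fun z : E3 => ‖z‖⁻¹) y :=
      (contDiffAt_norm ℝ (hy : (y:E3) ≠ 0)).inv (norm_ne_zero_iff.2 hy)
    exact hn.smul contDiffAt_id
  exact ((hF.contDiffAt.comp y h1)).contDiffWithinAt

lemma Nr_smul {c : ℝ} (hc : 0 < c) (y : E3) (hy : y ≠ 0) : Nr (c • y) = Nr y := by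
  unfold Nr
  rw [norm_smul, smul_smul]
  congr 1
  rw [Real.norm_eq_abs, abs_of_pos hc, mul_inv]
  have hcn : c ≠ 0 := ne_of_gt hc
  have hyn : ‖y‖ ≠ 0 := norm_ne_zero_iff.2 hy
  field_simp

-- basis expansion
lemma basis_expand (v : E3) : v = ∑ j, v j • uv j := by
  ext i
  simp [uv, Fin.sum_univ_three, PiLp.add_apply, PiLp.smul_apply, EuclideanSpace.single_apply]
  fin_cases i <;> simp

lemma fderiv_expand {f : E3 → ℝ} {x : E3} (v : E3) :
    fderiv ℝ f x v = ∑ j, v j * D j f x := by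
  conv_lhs => rw [basis_expand v]
  rw [map_sum]
  simp [D, smul_eq_mul]

-- homogeneity
def Hom (f : E3 → ℝ) (d : ℤ) : Prop :=
  ∀ c : ℝ, 0 < c → ∀ y : E3, y ≠ 0 → f (c • y) = c ^ d * f y

lemma Hom_comp_Nr (F : E3 → ℝ) : Hom (fun y => F (Nr y)) 0 := by
  intro c hc y hy
  show F (Nr (c • y)) = c ^ (0:ℤ) * F (Nr y)
  rw [Nr_smul hc y hy]; simp

lemma HomD {f : E3 → ℝ} (hf : Sm f) {d : ℤ} (h : Hom f d) (i : Fin 3) :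
    Hom (D i f) (d - 1) := by
  intro c hc y hy
  have hcy : c • y ≠ 0 := smul_ne_zero (ne_of_gt hc) hy
  have hdf : DifferentiableAt ℝ f (c • y) := hf.diffAt hcy
  have hsc : HasFDerivAt (fun z : E3 => c • z) (c • ContinuousLinearMap.id ℝ E3) y := by
    exact (hasFDerivAt_id y).const_smul c
  have hcomp : HasFDerivAt (fun z => f (c • z))
      ((fderiv ℝ f (c • y)).comp (c • ContinuousLinearMap.id ℝ E3)) y :=
    (hdf.hasFDerivAt).comp y hsc
  have heq : (fun z => f (c • z)) =ᶠ[nhds y] (fun z => c ^ d * f z) := by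
    refine eqOn_nhds (U3_mem hy) (fun z hz => h c hc z hz)
  have h2 : HasFDerivAt (fun z => c ^ d * f z)
      ((fderiv ℝ f (c • y)).comp (c • ContinuousLinearMap.id ℝ E3)) y :=
    hcomp.congr_of_eventuallyEq heq.symm
  have h3 : HasFDerivAt (fun z => c ^ d * f z) ((c ^ d : ℝ) • fderiv ℝ f y) y := by
    simpa using ((hf.diffAt (U3_mem hy)).hasFDerivAt).const_mul ((c:ℝ) ^ d)
  have h4 := h2.unique h3
  have h5 := congrFun (congrArg (fun L : E3 →L[ℝ] ℝ => (L : E3 → ℝ)) h4) (uv i)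
  simp only [ContinuousLinearMap.comp_apply, ContinuousLinearMap.smul_apply,
    ContinuousLinearMap.id_apply, ContinuousLinearMap.coe_smul', Pi.smul_apply] at h5
  -- h5 : fderiv f (c•y) (c • uv i) = c^d • fderiv f y (uv i)
  have h6 : c * D i f (c • y) = c ^ d * D i f y := by
    simpa [D, smul_eq_mul, _root_.map_smul] using h5
  have : D i f (c • y) = c ^ d / c * D i f y := by
    field_simp at h6 ⊢
    linarith [h6]
  rw [this, zpow_sub_one₀ (ne_of_gt hc)]
  ring

-- Euler's identity
lemma euler {f : E3 → ℝ} (hf : Sm f) {d : ℤ} (h : Hom f d) {x : E3} (hx : x ∈ U3) :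
    ∑ j, x j * D j f x = d * f x := by
  have hcurve : HasDerivAt (fun c : ℝ => c • x) ((1:ℝ) • x) 1 := by
    simpa using (hasDerivAt_id (1:ℝ)).smul_const x
  have hdf : DifferentiableAt ℝ f x := hf.diffAt hx
  have hcomp : HasDerivAt (fun c : ℝ => f (c • x)) (fderiv ℝ f x ((1:ℝ) • x)) 1 := by
    have := HasFDerivAt.comp_hasDerivAt 1 (by simpa using hdf.hasFDerivAt : HasFDerivAt f (fderiv ℝ f x) ((1:ℝ) • x)) hcurve
    simpa [Function.comp_def] using this
  have heq : (fun c : ℝ => f (c • x)) =ᶠ[nhds 1] (fun c : ℝ => c ^ d * f x) := by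
    have hpos : {c : ℝ | 0 < c} ∈ nhds (1:ℝ) := isOpen_lt continuous_const continuous_id |>.mem_nhds (by norm_num)
    exact Filter.eventuallyEq_of_mem hpos (fun c hc => h c hc x hx)
  have h2 : HasDerivAt (fun c : ℝ => c ^ d * f x) (fderiv ℝ f x x) 1 := by
    refine HasDerivAt.congr_of_eventuallyEq ?_ heq.symm
    simpa using hcomp
  have h3 : HasDerivAt (fun c : ℝ => c ^ d * f x) ((d * (1:ℝ) ^ (d - 1)) * f x) 1 :=
    (hasDerivAt_zpow d 1 (Or.inl one_ne_zero)).mul_const (f x)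
  have h4 := h2.unique h3
  rw [← fderiv_expand]
  rw [h4]; simp

-- elap basics
def elap' (F : E3 → ℝ) (x : E3) : ℝ := ∑ i, D i (D i F) x

lemma D_inv {f : E3 → ℝ} {x : E3} (hf : DifferentiableAt ℝ f x) (h0 : f x ≠ 0) (i : Fin 3) :
    D i (fun y => (f y)⁻¹) x = -(f x ^ 2)⁻¹ * D i f x := by
  have h := (hasDerivAt_inv h0).comp_hasFDerivAt x hf.hasFDerivAt
  have h' : HasFDerivAt (fun y => (f y)⁻¹) (-(f x ^ 2)⁻¹ • fderiv ℝ f x) x := h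
  rw [D, h'.fderiv]; simp [D]

lemma Sm_mul {u v : E3 → ℝ} (hu : Sm u) (hv : Sm v) : Sm (fun y => u y * v y) := hu.mul hv

lemma Sm_const_mul {u : E3 → ℝ} (hu : Sm u) (c : ℝ) : Sm (fun y => c * u y) :=
  (contDiffOn_const (c := c)).mul hu

lemma Sm_add {u v : E3 → ℝ} (hu : Sm u) (hv : Sm v) : Sm (fun y => u y + v y) := hu.add hv

lemma elap_congr {f g : E3 → ℝ} {x : E3} (hx : x ∈ U3) (h : ∀ y ∈ U3, f y = g y) :
    elap' f x = elap' g x := by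
  unfold elap'
  refine Finset.sum_congr rfl fun i _ => ?_
  refine D_congr hx (fun y hy => D_congr hy h i) i

lemma elap_mul {u v : E3 → ℝ} (hu : Sm u) (hv : Sm v) {x : E3} (hx : x ∈ U3) :
    elap' (fun y => u y * v y) x =
      elap' u x * v x + 2 * ∑ m, D m u x * D m v x + u x * elap' v x := by
  have key : ∀ m : Fin 3, D m (D m (fun y => u y * v y)) x =
      D m (D m u) x * v x + 2 * (D m u x * D m v x) + u x * D m (D m v) x := by
    intro m
    have h1 : D m (D m (fun y => u y * v y)) x =
        D m (fun y => D m u y * v y + u y * D m v y) x :=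
      D_congr hx (fun y hy => D_mul (hu.diffAt hy) (hv.diffAt hy) m) m
    rw [h1, D_add (((hu.D m).diffAt hx).fun_mul (hv.diffAt hx))
        ((hu.diffAt hx).fun_mul (((hv.D m).diffAt hx)) ) m,
      D_mul ((hu.D m).diffAt hx) (hv.diffAt hx) m,
      D_mul (hu.diffAt hx) ((hv.D m).diffAt hx) m]
    ring
  unfold elap'
  rw [Finset.sum_congr rfl fun m _ => key m]
  rw [Finset.sum_add_distrib, Finset.sum_add_distrib, ← Finset.sum_mul, ← Finset.mul_sum,
    ← Finset.mul_sum]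

-- coordinate functions
def cf (j : Fin 3) : E3 → ℝ := fun y => y j

lemma cf_diff (j : Fin 3) (y : E3) : DifferentiableAt ℝ (cf j) y :=
  (EuclideanSpace.proj j : E3 →L[ℝ] ℝ).differentiableAt

lemma Sm_cf (j : Fin 3) : Sm (cf j) :=
  ((EuclideanSpace.proj j : E3 →L[ℝ] ℝ).contDiff).contDiffOn

lemma D_cf (i j : Fin 3) (y : E3) : D i (cf j) y = if i = j then 1 else 0 := by
  have : fderiv ℝ (cf j) y = (EuclideanSpace.proj j : E3 →L[ℝ] ℝ) :=
    (EuclideanSpace.proj j : E3 →L[ℝ] ℝ).fderiv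
  rw [D, this]
  simp [uv, EuclideanSpace.single_apply, eq_comm]

-- squared norm
def n2 : E3 → ℝ := fun y => ‖y‖ ^ 2

lemma n2_diff (y : E3) : DifferentiableAt ℝ n2 y :=
  ((contDiff_norm_sq ℝ (n := (⊤ : ℕ∞))).differentiable (by simp)).differentiableAt

lemma D_n2 (i : Fin 3) (y : E3) : D i n2 y = 2 * y i := by
  have h : HasFDerivAt n2 (2 • (innerSL ℝ) y) y := (hasStrictFDerivAt_norm_sq y).hasFDerivAt
  rw [D, h.fderiv]
  simp [uv, EuclideanSpace.inner_single_right]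

lemma inner_coord (v w : E3) : ⟪v, w⟫ = ∑ i, v i * w i := by
  simp [PiLp.inner_apply, RCLike.inner_apply, conj_trivial]
  exact Finset.sum_congr rfl fun _ _ => mul_comm _ _

lemma n2_coord (y : E3) : n2 y = ∑ i, (y i)^2 := by
  have := inner_coord y y
  rw [real_inner_self_eq_norm_sq] at this
  simpa [n2, sq] using this

-- norm
def nrm : E3 → ℝ := fun y => ‖y‖

lemma Sm_nrm : Sm nrm := fun y hy => (contDiffAt_norm ℝ (hy : (y:E3) ≠ 0)).contDiffWithinAt

lemma D_nrm (i : Fin 3) {y : E3} (hy : y ∈ U3) : D i nrm y = y i * (nrm y)⁻¹ := by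
  have hy0 : (y : E3) ≠ 0 := hy
  have hn2 : n2 y ≠ 0 := by
    simp [n2, norm_ne_zero_iff.2 hy0]
  have hsq : HasDerivAt Real.sqrt (1 / (2 * Real.sqrt (n2 y))) (n2 y) :=
    Real.hasDerivAt_sqrt hn2
  have hcomp : HasFDerivAt (fun z : E3 => Real.sqrt (n2 z))
      ((1 / (2 * Real.sqrt (n2 y))) • (2 • (innerSL ℝ) y)) y :=
    hsq.comp_hasFDerivAt y ((hasStrictFDerivAt_norm_sq y).hasFDerivAt : HasFDerivAt n2 _ y)
  have heq : (fun z : E3 => Real.sqrt (n2 z)) = nrm := by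
    funext z
    simp [n2, nrm, Real.sqrt_sq (norm_nonneg z)]
  rw [← heq, D]
  rw [hcomp.fderiv]
  have hsn : Real.sqrt (n2 y) = ‖y‖ := by simp [n2, Real.sqrt_sq (norm_nonneg y)]
  simp [uv, hsn, EuclideanSpace.inner_single_right]
  show ‖y‖⁻¹ * 2⁻¹ * (2 * y i) = y i * (nrm y)⁻¹
  simp [nrm]
  ring

lemma elap_eq_elap' (f : E3 → ℝ) (x : E3) : elap f x = elap' f x := rfl

-- the 0-homogeneous extension
def ext0 (F : E3 → ℝ) : E3 → ℝ := fun y => F (Nr y)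

lemma Sm_ext0 {F : E3 → ℝ} (hF : ContDiff ℝ (⊤ : ℕ∞) F) : Sm (ext0 F) := Sm_comp_Nr hF
lemma Hom_ext0 (F : E3 → ℝ) : Hom (ext0 F) 0 := Hom_comp_Nr F

lemma Nr_mem_Sph {y : E3} (hy : y ∈ U3) : Nr y ∈ Sph := by
  have : ‖y‖ ≠ 0 := norm_ne_zero_iff.2 hy
  simp [Nr, Sph, norm_smul, abs_of_pos (lt_of_le_of_ne (norm_nonneg y) (Ne.symm this))]
  field_simp

lemma sph_ne_zero {z : E3} (hz : z ∈ Sph) : z ∈ U3 := by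
  have : ‖z‖ = 1 := by simpa [Sph] using hz
  intro h0; rw [h0] at this; simp at this

-- eigenfunction extension identity on all of U3
lemma elap_ext0_eq {F : E3 → ℝ} {lam : ℝ} (hF : ContDiff ℝ (⊤ : ℕ∞) F)
    (heF : ∀ z ∈ Sph, slap F z = -lam * F z) :
    ∀ y ∈ U3, elap' (ext0 F) y = -lam * ((n2 y)⁻¹ * ext0 F y) := by
  intro y hy
  have hy0 : (y : E3) ≠ 0 := hy
  have hnorm : (0:ℝ) < ‖y‖ := norm_pos_iff.2 hy0
  set z := Nr y with hz
  have hzS : z ∈ Sph := Nr_mem_Sph hy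
  have hzU : z ∈ U3 := sph_ne_zero hzS
  have hyz : y = ‖y‖ • z := by
    rw [hz]; unfold Nr; rw [smul_smul]; field_simp; simp
  -- homogeneity of each second derivative
  have hhom : ∀ m : Fin 3, D m (D m (ext0 F)) y = ‖y‖ ^ (-2 : ℤ) * D m (D m (ext0 F)) z := by
    intro m
    have h1 : Hom (D m (D m (ext0 F))) (-2) := by
      have := HomD ((Sm_ext0 hF).D m) (HomD (Sm_ext0 hF) (Hom_ext0 F) m) m
      norm_num at this
      exact this
    conv_lhs => rw [hyz]
    exact h1 ‖y‖ hnorm z hzU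
  have hslap : elap' (ext0 F) z = -lam * F z := by
    rw [← elap_eq_elap']
    have : elap (ext0 F) z = slap F z := rfl
    rw [this]; exact heF z hzS
  have hFz : ext0 F y = F z := rfl
  have hn2 : n2 y = ‖y‖ ^ 2 := rfl
  calc elap' (ext0 F) y = ∑ m, D m (D m (ext0 F)) y := rfl
    _ = ∑ m, ‖y‖ ^ (-2 : ℤ) * D m (D m (ext0 F)) z := Finset.sum_congr rfl fun m _ => hhom m
    _ = ‖y‖ ^ (-2 : ℤ) * elap' (ext0 F) z := by rw [← Finset.mul_sum]; rfl
    _ = -lam * ((n2 y)⁻¹ * ext0 F y) := by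
        rw [hslap, hFz, hn2]
        rw [zpow_neg, zpow_two]
        ring_nf

lemma D_sum3 {f : Fin 3 → E3 → ℝ} {x : E3} (hf : ∀ m, DifferentiableAt ℝ (f m) x) (k : Fin 3) :
    D k (fun y => ∑ m, f m y) x = ∑ m, D k (f m) x := by
  unfold D
  rw [fderiv_fun_sum (fun m _ => hf m)]
  simp

lemma swap3 {f : E3 → ℝ} (hf : Sm f) {x : E3} (hx : x ∈ U3) (k : Fin 3) :
    ∑ m, D m (D m (D k f)) x = D k (fun y => elap' f y) x := by
  have step : ∀ m : Fin 3, D m (D m (D k f)) x = D k (D m (D m f)) x := by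
    intro m
    have h1 : D m (D m (D k f)) x = D m (D k (D m f)) x :=
      D_congr hx (fun y hy => schwarz hf hy m k) m
    rw [h1, schwarz (hf.D m) hx m k]
  rw [Finset.sum_congr rfl fun m _ => step m]
  rw [← D_sum3 (fun m => ((hf.D m).D m).diffAt hx) k]
  rfl

-- derivative of the eigen identity at a point of the sphere
lemma D_elap_ext0 {F : E3 → ℝ} {lam : ℝ} (hF : ContDiff ℝ (⊤ : ℕ∞) F)
    (heF : ∀ z ∈ Sph, slap F z = -lam * F z) {x : E3} (hxS : x ∈ Sph) (k : Fin 3) :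
    D k (fun y => elap' (ext0 F) y) x
      = -lam * (-2 * x k * ext0 F x + D k (ext0 F) x) := by
  have hx : x ∈ U3 := sph_ne_zero hxS
  have hx1 : ‖x‖ = 1 := by simpa [Sph] using hxS
  have hcongr : D k (fun y => elap' (ext0 F) y) x
      = D k (fun y => -lam * ((n2 y)⁻¹ * ext0 F y)) x :=
    D_congr hx (elap_ext0_eq hF heF) k
  have hq : DifferentiableAt ℝ (fun y => (n2 y)⁻¹) x := by
    refine (n2_diff x).inv ?_
    simp [n2, hx1]
  have hFt : DifferentiableAt ℝ (ext0 F) x := (Sm_ext0 hF).diffAt hx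
  rw [hcongr, D_const_mul (hq.fun_mul hFt) (-lam) k, D_mul hq hFt k,
    D_inv (n2_diff x) (by simp [n2, hx1]) k, D_n2 k x]
  simp [n2, hx1]

-- gradient coordinates
lemma inner_gradient (f : E3 → ℝ) (y v : E3) : ⟪gradient f y, v⟫ = fderiv ℝ f y v :=
  InnerProductSpace.toDual_symm_apply

lemma coord_eq_inner (v : E3) (k : Fin 3) : v k = ⟪v, uv k⟫ := by
  rw [uv, EuclideanSpace.inner_single_right]
  simp

lemma sgrad_eq (F : E3 → ℝ) (y : E3) : sgrad F y = gradient (ext0 F) y := rfl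

lemma sgrad_coord (F : E3 → ℝ) (y : E3) (k : Fin 3) :
    sgrad F y k = D k (ext0 F) y := by
  rw [sgrad_eq, coord_eq_inner (gradient (ext0 F) y) k, inner_gradient]; rfl

lemma sgrad_diffAt {F : E3 → ℝ} (hF : ContDiff ℝ (⊤ : ℕ∞) F) {x : E3} (hx : x ∈ U3) :
    DifferentiableAt ℝ (sgrad F) x := by
  have h1 : ContDiffOn ℝ (⊤ : ℕ∞) (fderiv ℝ (ext0 F)) U3 :=
    (Sm_ext0 hF).fderiv_of_isOpen (m := (⊤ : ℕ∞)) U3_open (by simp)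
  have h2 : DifferentiableAt ℝ (fderiv ℝ (ext0 F)) x :=
    ((h1.contDiffWithinAt hx).contDiffAt (U3_nhds hx)).differentiableAt (by simp)
  have h3 : sgrad F = fun y =>
      (InnerProductSpace.toDual ℝ E3).symm (fderiv ℝ (ext0 F) y) := rfl
  rw [h3]
  exact ((InnerProductSpace.toDual ℝ E3).symm.toContinuousLinearEquiv :
    (E3 →L[ℝ] ℝ) ≃L[ℝ] E3).differentiableAt.comp x h2

lemma shess_coord {F : E3 → ℝ} (hF : ContDiff ℝ (⊤ : ℕ∞) F) {x : E3} (hx : x ∈ U3) (v w : E3) :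
    shess F x v w = ∑ k, ∑ j, w k * (v j * D j (D k (ext0 F)) x) := by
  unfold shess
  rw [inner_coord]
  refine Finset.sum_congr rfl fun k _ => ?_
  have hproj : (fderiv ℝ (sgrad F) x v) k
      = fderiv ℝ (fun y => sgrad F y k) x v := by
    have hpk := ((EuclideanSpace.proj k : E3 →L[ℝ] ℝ).hasFDerivAt
      (x := sgrad F x)).comp x (sgrad_diffAt hF hx).hasFDerivAt
    have hpk' : HasFDerivAt (fun y => sgrad F y k)
        ((EuclideanSpace.proj k).comp (fderiv ℝ (sgrad F) x)) x := hpk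
    rw [hpk'.fderiv]
    rfl
  rw [hproj]
  have : (fun y => sgrad F y k) = fun y => D k (ext0 F) y := by
    funext y; exact sgrad_coord F y k
  rw [this, fderiv_expand, Finset.sum_mul]
  refine Finset.sum_congr rfl fun j _ => ?_
  show v j * D j (fun y => D k (ext0 F) y) x * w k
    = w k * (v j * D j (fun y => D k (ext0 F) y) x)
  ring

lemma D_diffAt {f : E3 → ℝ} (hf : Sm f) {x : E3} (hx : x ∈ U3) (i : Fin 3) :
    DifferentiableAt ℝ (D i f) x := (hf.D i).diffAt hx

lemma elap_add {u v : E3 → ℝ} (hu : Sm u) (hv : Sm v) {x : E3} (hx : x ∈ U3) :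
    elap' (fun y => u y + v y) x = elap' u x + elap' v x := by
  unfold elap'
  rw [← Finset.sum_add_distrib]
  refine Finset.sum_congr rfl fun i _ => ?_
  have h1 : D i (D i (fun y => u y + v y)) x = D i (fun y => D i u y + D i v y) x :=
    D_congr hx (fun y hy => D_add (hu.diffAt hy) (hv.diffAt hy) i) i
  rw [h1, D_add (D_diffAt hu hx i) (D_diffAt hv hx i) i]

lemma elap_sub {u v : E3 → ℝ} (hu : Sm u) (hv : Sm v) {x : E3} (hx : x ∈ U3) :
    elap' (fun y => u y - v y) x = elap' u x - elap' v x := by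
  have hnv : Sm (fun y => (-1 : ℝ) * v y) := Sm_const_mul hv (-1)
  have h1 : elap' (fun y => u y + (-1) * v y) x = elap' u x + elap' (fun y => (-1) * v y) x :=
    elap_add hu hnv hx
  have h2 : elap' (fun y => (-1 : ℝ) * v y) x = -elap' v x := by
    unfold elap'
    rw [← Finset.sum_neg_distrib]
    refine Finset.sum_congr rfl fun i _ => ?_
    have h3 : D i (D i (fun y => (-1 : ℝ) * v y)) x = D i (fun y => (-1) * D i v y) x :=
      D_congr hx (fun y hy => D_const_mul (hv.diffAt hy) (-1) i) i
    rw [h3, D_const_mul (D_diffAt hv hx i) (-1) i]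
    ring
  have h4 : (fun y => u y - v y) = fun y => u y + (-1) * v y := by funext y; ring
  rw [h4, h1, h2]; ring

lemma elap_cf (j : Fin 3) (x : E3) : elap' (cf j) x = 0 := by
  unfold elap'
  refine Finset.sum_eq_zero fun m _ => ?_
  have h1 : D m (cf j) = fun _ : E3 => (if m = j then (1:ℝ) else 0) := by
    funext y; exact D_cf m j y
  rw [D, h1, fderiv_fun_const]
  simp

lemma elap_T {F H : E3 → ℝ} (hF : ContDiff ℝ (⊤ : ℕ∞) F) (hH : ContDiff ℝ (⊤ : ℕ∞) H) {x : E3}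
    (hx : x ∈ U3) (j k i : Fin 3) :
    elap' (fun y => cf j y * (D k (ext0 F) y * D i (ext0 H) y)) x
      = 2 * (D j (D k (ext0 F)) x * D i (ext0 H) x
            + D k (ext0 F) x * D j (D i (ext0 H)) x)
        + cf j x * (elap' (D k (ext0 F)) x * D i (ext0 H) x
            + 2 * ∑ m, D m (D k (ext0 F)) x * D m (D i (ext0 H)) x
            + D k (ext0 F) x * elap' (D i (ext0 H)) x) := by
  have hgk : Sm (D k (ext0 F)) := (Sm_ext0 hF).D k
  have hhi : Sm (D i (ext0 H)) := (Sm_ext0 hH).D i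
  have hv : Sm (fun y => D k (ext0 F) y * D i (ext0 H) y) := Sm_mul hgk hhi
  rw [elap_mul (Sm_cf j) hv hx, elap_cf j x,
    elap_mul hgk hhi hx]
  have hmid : ∀ m : Fin 3, D m (cf j) x * D m (fun y => D k (ext0 F) y * D i (ext0 H) y) x
      = if m = j then (D m (D k (ext0 F)) x * D i (ext0 H) x
          + D k (ext0 F) x * D m (D i (ext0 H)) x) else 0 := by
    intro m
    rw [D_cf m j x, D_mul (hgk.diffAt hx) (hhi.diffAt hx) m]
    split <;> simp
  rw [Finset.sum_congr rfl fun m _ => hmid m, Finset.sum_ite_eq' Finset.univ j]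
  simp

lemma cross3_apply (x v : E3) (k : Fin 3) :
    cross3 x v k = ![x 1 * v 2 - x 2 * v 1, x 2 * v 0 - x 0 * v 2, x 0 * v 1 - x 1 * v 0] k := rfl

def Gf (F H : E3 → ℝ) : E3 → ℝ := fun y =>
  (cf 1 y * (D 2 (ext0 F) y * D 0 (ext0 H) y) - cf 2 y * (D 1 (ext0 F) y * D 0 (ext0 H) y))
  + ((cf 2 y * (D 0 (ext0 F) y * D 1 (ext0 H) y) - cf 0 y * (D 2 (ext0 F) y * D 1 (ext0 H) y))
  + (cf 0 y * (D 1 (ext0 F) y * D 2 (ext0 H) y) - cf 1 y * (D 0 (ext0 F) y * D 2 (ext0 H) y)))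

lemma Gf_eq_inner (F H : E3 → ℝ) (y : E3) :
    ⟪Jop y (sgrad F y), sgrad H y⟫ = Gf F H y := by
  rw [inner_coord, Fin.sum_univ_three]
  show Jop y (sgrad F y) 0 * sgrad H y 0 + Jop y (sgrad F y) 1 * sgrad H y 1
      + Jop y (sgrad F y) 2 * sgrad H y 2 = _
  unfold Jop
  rw [cross3_apply, cross3_apply, cross3_apply]
  simp only [Matrix.cons_val_zero, Matrix.cons_val_one, Matrix.head_cons,
    Matrix.cons_val_two, Matrix.tail_cons]
  rw [sgrad_coord, sgrad_coord, sgrad_coord, sgrad_coord, sgrad_coord, sgrad_coord]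
  unfold Gf cf
  ring

lemma Sm_T {F H : E3 → ℝ} (hF : ContDiff ℝ (⊤ : ℕ∞) F) (hH : ContDiff ℝ (⊤ : ℕ∞) H) (j k i : Fin 3) :
    Sm (fun y => cf j y * (D k (ext0 F) y * D i (ext0 H) y)) :=
  Sm_mul (Sm_cf j) (Sm_mul ((Sm_ext0 hF).D k) ((Sm_ext0 hH).D i))

lemma Sm_Gf {F H : E3 → ℝ} (hF : ContDiff ℝ (⊤ : ℕ∞) F) (hH : ContDiff ℝ (⊤ : ℕ∞) H) : Sm (Gf F H) := by
  unfold Gf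
  exact Sm_add (((Sm_T hF hH 1 2 0).sub (Sm_T hF hH 2 1 0)))
    (Sm_add ((Sm_T hF hH 2 0 1).sub (Sm_T hF hH 0 2 1))
      ((Sm_T hF hH 0 1 2).sub (Sm_T hF hH 1 0 2)))

lemma Hom_Gf {F H : E3 → ℝ} (hF : ContDiff ℝ (⊤ : ℕ∞) F) (hH : ContDiff ℝ (⊤ : ℕ∞) H) :
    Hom (Gf F H) (-1) := by
  intro c hc y hy
  have hgF : ∀ k : Fin 3, D k (ext0 F) (c • y) = c ^ (-1 : ℤ) * D k (ext0 F) y := by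
    intro k
    have := HomD (Sm_ext0 hF) (Hom_ext0 F) k
    norm_num at this
    exact this c hc y hy
  have hgH : ∀ k : Fin 3, D k (ext0 H) (c • y) = c ^ (-1 : ℤ) * D k (ext0 H) y := by
    intro k
    have := HomD (Sm_ext0 hH) (Hom_ext0 H) k
    norm_num at this
    exact this c hc y hy
  have hcf : ∀ j : Fin 3, cf j (c • y) = c * cf j y := by
    intro j; simp [cf, PiLp.smul_apply]
  unfold Gf
  rw [hgF 0, hgF 1, hgF 2, hgH 0, hgH 1, hgH 2, hcf 0, hcf 1, hcf 2]
  have hne : c ≠ 0 := ne_of_gt hc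
  rw [zpow_neg_one]
  field_simp

lemma elap_nrm {x : E3} (hxS : x ∈ Sph) : elap' nrm x = 2 := by
  have hx : x ∈ U3 := sph_ne_zero hxS
  have hx1 : ‖x‖ = 1 := by simpa [Sph] using hxS
  have hnx : nrm x = 1 := hx1
  have key : ∀ i : Fin 3, D i (D i nrm) x = 1 - x i * x i := by
    intro i
    have h1 : D i (D i nrm) x = D i (fun y => cf i y * (nrm y)⁻¹) x :=
      D_congr hx (fun y hy => D_nrm i hy) i
    have hinv : DifferentiableAt ℝ (fun y => (nrm y)⁻¹) x :=
      (Sm_nrm.diffAt hx).inv (by rw [hnx]; norm_num)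
    rw [h1, D_mul (cf_diff i x) hinv i,
      D_inv (Sm_nrm.diffAt hx) (by rw [hnx]; norm_num) i, D_cf i i x,
      D_nrm i hx, hnx]
    simp [cf]
    ring
  unfold elap'
  rw [Finset.sum_congr rfl fun i _ => key i]
  have hsum : ∑ i : Fin 3, x i * x i = 1 := by
    have := n2_coord x
    rw [show n2 x = 1 by simp [n2, hx1]] at this
    rw [Fin.sum_univ_three] at this ⊢
    ring_nf
    ring_nf at this
    linarith
  rw [Finset.sum_sub_distrib, hsum]
  norm_num

lemma slap_inner_eq {F H : E3 → ℝ} (hF : ContDiff ℝ (⊤ : ℕ∞) F) (hH : ContDiff ℝ (⊤ : ℕ∞) H)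
    {x : E3} (hxS : x ∈ Sph) :
    slap (fun y => ⟪Jop y (sgrad F y), sgrad H y⟫) x = elap' (Gf F H) x := by
  have hx : x ∈ U3 := sph_ne_zero hxS
  have hx1 : ‖x‖ = 1 := by simpa [Sph] using hxS
  have h0 : slap (fun y => ⟪Jop y (sgrad F y), sgrad H y⟫) x
      = elap' (ext0 (Gf F H)) x := by
    rw [← elap_eq_elap']
    show elap (fun y => ⟪Jop (Nr y) (sgrad F (Nr y)), sgrad H (Nr y)⟫) x = _
    congr 1
    funext y
    show _ = Gf F H (Nr y)
    rw [Gf_eq_inner]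
  rw [h0]
  have h1 : elap' (ext0 (Gf F H)) x = elap' (fun y => nrm y * Gf F H y) x := by
    refine elap_congr hx fun y hy => ?_
    have hy0 : (y : E3) ≠ 0 := hy
    have hnorm : (0:ℝ) < ‖y‖ := norm_pos_iff.2 hy0
    show Gf F H (Nr y) = nrm y * Gf F H y
    have : Gf F H (‖y‖⁻¹ • y) = (‖y‖⁻¹) ^ (-1 : ℤ) * Gf F H y :=
      Hom_Gf hF hH ‖y‖⁻¹ (by positivity) y hy0
    rw [show Nr y = ‖y‖⁻¹ • y from rfl, this]
    simp [nrm]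
  rw [h1, elap_mul Sm_nrm (Sm_Gf hF hH) hx, elap_nrm hxS]
  have heuler : ∑ m, x m * D m (Gf F H) x = -1 * Gf F H x := by
    have := euler (Sm_Gf hF hH) (Hom_Gf hF hH) hx
    norm_num at this ⊢
    exact this
  have hDn : ∀ m : Fin 3, D m nrm x = x m := by
    intro m; rw [D_nrm m hx, show nrm x = 1 from hx1]; simp
  have hmid : ∑ m, D m nrm x * D m (Gf F H) x = -Gf F H x := by
    rw [Finset.sum_congr rfl fun m _ => by rw [hDn m]]
    linarith [heuler]
  rw [hmid, show nrm x = 1 from hx1]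
  ring

lemma elap_Gf_expand {F H : E3 → ℝ} (hF : ContDiff ℝ (⊤ : ℕ∞) F) (hH : ContDiff ℝ (⊤ : ℕ∞) H)
    {x : E3} (hx : x ∈ U3) :
    elap' (Gf F H) x
      = elap' (fun y => cf 1 y * (D 2 (ext0 F) y * D 0 (ext0 H) y)) x
        - elap' (fun y => cf 2 y * (D 1 (ext0 F) y * D 0 (ext0 H) y)) x
        + (elap' (fun y => cf 2 y * (D 0 (ext0 F) y * D 1 (ext0 H) y)) x
        - elap' (fun y => cf 0 y * (D 2 (ext0 F) y * D 1 (ext0 H) y)) x)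
        + (elap' (fun y => cf 0 y * (D 1 (ext0 F) y * D 2 (ext0 H) y)) x
        - elap' (fun y => cf 1 y * (D 0 (ext0 F) y * D 2 (ext0 H) y)) x) := by
  unfold Gf
  rw [elap_add ((Sm_T hF hH 1 2 0).sub (Sm_T hF hH 2 1 0))
    (Sm_add ((Sm_T hF hH 2 0 1).sub (Sm_T hF hH 0 2 1))
      ((Sm_T hF hH 0 1 2).sub (Sm_T hF hH 1 0 2))) hx,
    elap_add ((Sm_T hF hH 2 0 1).sub (Sm_T hF hH 0 2 1))
      ((Sm_T hF hH 0 1 2).sub (Sm_T hF hH 1 0 2)) hx,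
    elap_sub (Sm_T hF hH 1 2 0) (Sm_T hF hH 2 1 0) hx,
    elap_sub (Sm_T hF hH 2 0 1) (Sm_T hF hH 0 2 1) hx,
    elap_sub (Sm_T hF hH 0 1 2) (Sm_T hF hH 1 0 2) hx]
  ring

lemma FIN (a0 a1 a2 e00 e01 e02 e10 e11 e12 f00 f01 f02 f11 f12 f22 k00 k01 k02 k11 k12 k22 g0 g1 g2 h0 h1 h2 phi psi lam mu : ℝ)
    (hg0 : a0*f00 + a1*f01 + a2*f02 = -g0)
    (hg1 : a0*f01 + a1*f11 + a2*f12 = -g1)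
    (hg2 : a0*f02 + a1*f12 + a2*f22 = -g2)
    (hh0 : a0*k00 + a1*k01 + a2*k02 = -h0)
    (hh1 : a0*k01 + a1*k11 + a2*k12 = -h1)
    (hh2 : a0*k02 + a1*k12 + a2*k22 = -h2)
    (c00 : e00*e00 + e10*e10 + a0*a0 = 1)
    (c01 : e00*e01 + e10*e11 + a0*a1 = 0)
    (c02 : e00*e02 + e10*e12 + a0*a2 = 0)
    (c11 : e01*e01 + e11*e11 + a1*a1 = 1)
    (c12 : e01*e02 + e11*e12 + a1*a2 = 0)
    (c22 : e02*e02 + e12*e12 + a2*a2 = 1) :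
    (2*(f12*h0 + g2*k01) + a1*((-lam*(-2*a2*phi + g2))*h0 + 2*(f02*k00 + f12*k01 + f22*k02) + g2*(-mu*(-2*a0*psi + h0)))) - (2*(f12*h0 + g1*k02) + a2*((-lam*(-2*a1*phi + g1))*h0 + 2*(f01*k00 + f11*k01 + f12*k02) + g1*(-mu*(-2*a0*psi + h0)))) + (2*(f02*h1 + g0*k12) + a2*((-lam*(-2*a0*phi + g0))*h1 + 2*(f00*k01 + f01*k11 + f02*k12) + g0*(-mu*(-2*a1*psi + h1)))) - (2*(f02*h1 + g2*k01) + a0*((-lam*(-2*a2*phi + g2))*h1 + 2*(f02*k01 + f12*k11 + f22*k12) + g2*(-mu*(-2*a1*psi + h1)))) + (2*(f01*h2 + g1*k02) + a0*((-lam*(-2*a1*phi + g1))*h2 + 2*(f01*k02 + f11*k12 + f12*k22) + g1*(-mu*(-2*a2*psi + h2)))) - (2*(f01*h2 + g0*k12) + a1*((-lam*(-2*a0*phi + g0))*h2 + 2*(f00*k02 + f01*k12 + f02*k22) + g0*(-mu*(-2*a2*psi + h2))))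
    = -(lam + mu - 2)*((a1*g2 - a2*g1)*h0 + (a2*g0 - a0*g2)*h1 + (a0*g1 - a1*g0)*h2) - 2*(((a1*e02 - a2*e01)*(e00*f00) + (a1*e02 - a2*e01)*(e01*f01) + (a1*e02 - a2*e01)*(e02*f02) + (a2*e00 - a0*e02)*(e00*f01) + (a2*e00 - a0*e02)*(e01*f11) + (a2*e00 - a0*e02)*(e02*f12) + (a0*e01 - a1*e00)*(e00*f02) + (a0*e01 - a1*e00)*(e01*f12) + (a0*e01 - a1*e00)*(e02*f22))*(e00*(e00*k00) + e00*(e01*k01) + e00*(e02*k02) + e01*(e00*k01) + e01*(e01*k11) + e01*(e02*k12) + e02*(e00*k02) + e02*(e01*k12) + e02*(e02*k22)) + ((a1*e12 - a2*e11)*(e00*f00) + (a1*e12 - a2*e11)*(e01*f01) + (a1*e12 - a2*e11)*(e02*f02) + (a2*e10 - a0*e12)*(e00*f01) + (a2*e10 - a0*e12)*(e01*f11) + (a2*e10 - a0*e12)*(e02*f12) + (a0*e11 - a1*e10)*(e00*f02) + (a0*e11 - a1*e10)*(e01*f12) + (a0*e11 - a1*e10)*(e02*f22))*(e10*(e00*k00)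 + e10*(e01*k01) + e10*(e02*k02) + e11*(e00*k01) + e11*(e01*k11) + e11*(e02*k12) + e12*(e00*k02) + e12*(e01*k12) + e12*(e02*k22)) + ((a1*e02 - a2*e01)*(e10*f00) + (a1*e02 - a2*e01)*(e11*f01) + (a1*e02 - a2*e01)*(e12*f02) + (a2*e00 - a0*e02)*(e10*f01) + (a2*e00 - a0*e02)*(e11*f11) + (a2*e00 - a0*e02)*(e12*f12) + (a0*e01 - a1*e00)*(e10*f02) + (a0*e01 - a1*e00)*(e11*f12) + (a0*e01 - a1*e00)*(e12*f22))*(e00*(e10*k00) + e00*(e11*k01) + e00*(e12*k02) + e01*(e10*k01) + e01*(e11*k11) + e01*(e12*k12) + e02*(e10*k02) + e02*(e11*k12) + e02*(e12*k22)) + ((a1*e12 - a2*e11)*(e10*f00) + (a1*e12 - a2*e11)*(e11*f01) + (a1*e12 - a2*e11)*(e12*f02) + (a2*e10 - a0*e12)*(e10*f01) + (a2*e10 - a0*e12)*(e11*f11) + (a2*e10 - a0*e12)*(e12*f12) + (a0*e11 - a1*e10)*(e10*f02) + (a0*e11 - a1*e10)*(e11*f12) + (a0*e11 - a1*e10)*(e12*f22))*(e10*(e10*k00)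 + e10*(e11*k01) + e10*(e12*k02) + e11*(e10*k01) + e11*(e11*k11) + e11*(e12*k12) + e12*(e10*k02) + e12*(e11*k12) + e12*(e12*k22))) := by
  have Hg0 : g0 = -(a0*f00 + a1*f01 + a2*f02) := by linarith
  have Hg1 : g1 = -(a0*f01 + a1*f11 + a2*f12) := by linarith
  have Hg2 : g2 = -(a0*f02 + a1*f12 + a2*f22) := by linarith
  have Hh0 : h0 = -(a0*k00 + a1*k01 + a2*k02) := by linarith
  have Hh1 : h1 = -(a0*k01 + a1*k11 + a2*k12) := by linarith
  have Hh2 : h2 = -(a0*k02 + a1*k12 + a2*k22) := by linarith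
  subst Hg0 Hg1 Hg2 Hh0 Hh1 Hh2
  linear_combination (-2*(((a1*f02*k00) + (-a2*f01*k00) + (a2*f00*k01) + (-a0*f02*k01) + (a0*f01*k02) + (-a1*f00*k02)) + (a1*(e00*f02 + e01*f12 + e02*f22) - a2*(e00*f01 + e01*f11 + e02*f12))*(e00*k00 + e01*k01 + e02*k02) + (a1*(e10*f02 + e11*f12 + e12*f22) - a2*(e10*f01 + e11*f11 + e12*f12))*(e10*k00 + e11*k01 + e12*k02))) * c00 + (-2*(((a1*f02*k01) + (-a2*f01*k01) + (a2*f00*k11) + (-a0*f02*k11) + (a0*f01*k12) + (-a1*f00*k12)) + ((a1*f12*k00) + (-a2*f11*k00) + (a2*f01*k01) + (-a0*f12*k01) + (a0*f11*k02) + (-a1*f01*k02)) + (a1*(e00*f02 + e01*f12 + e02*f22) - a2*(e00*f01 + e01*f11 + e02*f12))*(e00*k01 + e01*k11 + e02*k12) + (a2*(e00*f00 + e01*f01 + e02*f02) - a0*(e00*f02 + e01*f12 + e02*f22))*(e00*k00 + e01*k01 + e02*k02) + (a1*(e10*f02 + e11*f12 + e12*f22) - a2*(e10*f01 + e11*f11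 + e12*f12))*(e10*k01 + e11*k11 + e12*k12) + (a2*(e10*f00 + e11*f01 + e12*f02) - a0*(e10*f02 + e11*f12 + e12*f22))*(e10*k00 + e11*k01 + e12*k02))) * c01 + (-2*(((a1*f02*k02) + (-a2*f01*k02) + (a2*f00*k12) + (-a0*f02*k12) + (a0*f01*k22) + (-a1*f00*k22)) + ((a1*f22*k00) + (-a2*f12*k00) + (a2*f02*k01) + (-a0*f22*k01) + (a0*f12*k02) + (-a1*f02*k02)) + (a1*(e00*f02 + e01*f12 + e02*f22) - a2*(e00*f01 + e01*f11 + e02*f12))*(e00*k02 + e01*k12 + e02*k22) + (a0*(e00*f01 + e01*f11 + e02*f12) - a1*(e00*f00 + e01*f01 + e02*f02))*(e00*k00 + e01*k01 + e02*k02) + (a1*(e10*f02 + e11*f12 + e12*f22) - a2*(e10*f01 + e11*f11 + e12*f12))*(e10*k02 + e11*k12 + e12*k22) + (a0*(e10*f01 + e11*f11 + e12*f12) - a1*(e10*f00 + e11*f01 + e12*f02))*(e10*k00 + e11*k01 + e12*k02))) * c02 + (-2*(((a1*f12*k01) + (-a2*f11*k01) + (a2*f01*k11) + (-a0*f12*k11)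 + (a0*f11*k12) + (-a1*f01*k12)) + (a2*(e00*f00 + e01*f01 + e02*f02) - a0*(e00*f02 + e01*f12 + e02*f22))*(e00*k01 + e01*k11 + e02*k12) + (a2*(e10*f00 + e11*f01 + e12*f02) - a0*(e10*f02 + e11*f12 + e12*f22))*(e10*k01 + e11*k11 + e12*k12))) * c11 + (-2*(((a1*f12*k02) + (-a2*f11*k02) + (a2*f01*k12) + (-a0*f12*k12) + (a0*f11*k22) + (-a1*f01*k22)) + ((a1*f22*k01) + (-a2*f12*k01) + (a2*f02*k11) + (-a0*f22*k11) + (a0*f12*k12) + (-a1*f02*k12)) + (a2*(e00*f00 + e01*f01 + e02*f02) - a0*(e00*f02 + e01*f12 + e02*f22))*(e00*k02 + e01*k12 + e02*k22) + (a0*(e00*f01 + e01*f11 + e02*f12) - a1*(e00*f00 + e01*f01 + e02*f02))*(e00*k01 + e01*k11 + e02*k12) + (a2*(e10*f00 + e11*f01 + e12*f02) - a0*(e10*f02 + e11*f12 + e12*f22))*(e10*k02 + e11*k12 + e12*k22) + (a0*(e10*f01 + e11*f11 + e12*f12) - a1*(e10*f00 + e11*f01 + e12*f02))*(e10*k01 +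 e11*k11 + e12*k12))) * c12 + (-2*(((a1*f22*k02) + (-a2*f12*k02) + (a2*f02*k12) + (-a0*f22*k12) + (a0*f12*k22) + (-a1*f02*k22)) + (a0*(e00*f01 + e01*f11 + e02*f12) - a1*(e00*f00 + e01*f01 + e02*f02))*(e00*k02 + e01*k12 + e02*k22) + (a0*(e10*f01 + e11*f11 + e12*f12) - a1*(e10*f00 + e11*f01 + e12*f02))*(e10*k02 + e11*k12 + e12*k22))) * c22

lemma elap_Dk {F : E3 → ℝ} {lam : ℝ} (hF : ContDiff ℝ (⊤ : ℕ∞) F)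
    (heF : ∀ z ∈ Sph, slap F z = -lam * F z) {x : E3} (hxS : x ∈ Sph) (k : Fin 3) :
    elap' (D k (ext0 F)) x = -lam * (-2 * x k * ext0 F x + D k (ext0 F) x) := by
  have hx : x ∈ U3 := sph_ne_zero hxS
  have h1 : elap' (D k (ext0 F)) x = ∑ m, D m (D m (D k (ext0 F))) x := rfl
  rw [h1, swap3 (Sm_ext0 hF) hx k, D_elap_ext0 hF heF hxS k]

lemma Jop_c0 (x v : E3) : Jop x v 0 = x 1 * v 2 - x 2 * v 1 := rfl
lemma Jop_c1 (x v : E3) : Jop x v 1 = x 2 * v 0 - x 0 * v 2 := rfl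
lemma Jop_c2 (x v : E3) : Jop x v 2 = x 0 * v 1 - x 1 * v 0 := rfl

lemma completeness {x : E3} (hxS : x ∈ Sph) (e : Fin 2 → E3)
    (horth : ∀ i, ⟪e i, x⟫ = 0)
    (hfr : ∀ i j, ⟪e i, e j⟫ = if i = j then (1:ℝ) else 0) :
    ∀ m n : Fin 3, e 0 m * e 0 n + e 1 m * e 1 n + x m * x n
      = if m = n then (1:ℝ) else 0 := by
  have hx1 : ‖x‖ = 1 := by simpa [Sph] using hxS
  have hxx : x 0 * x 0 + x 1 * x 1 + x 2 * x 2 = 1 := by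
    have h := n2_coord x
    rw [show n2 x = 1 by simp [n2, hx1], Fin.sum_univ_three] at h
    ring_nf at h ⊢
    linarith
  have hox : ∀ i, e i 0 * x 0 + e i 1 * x 1 + e i 2 * x 2 = 0 := by
    intro i
    have := horth i
    rw [inner_coord, Fin.sum_univ_three] at this
    exact this
  have hip : ∀ i j, e i 0 * e j 0 + e i 1 * e j 1 + e i 2 * e j 2
      = if i = j then (1:ℝ) else 0 := by
    intro i j
    have := hfr i j
    rw [inner_coord, Fin.sum_univ_three] at this
    exact this
  set b : Fin 3 → E3 := ![e 0, e 1, x] with hb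
  set M : Matrix (Fin 3) (Fin 3) ℝ := Matrix.of (fun i j => b i j) with hM
  have hrow : M * M.transpose = 1 := by
    ext i j
    fin_cases i <;> fin_cases j <;>
      simp [hM, Matrix.mul_apply, Fin.sum_univ_three, hb, Matrix.one_apply] <;>
      [skip; skip; skip; skip; skip; skip; skip; skip; skip] <;> skip
    · simpa using hip 0 0
    · simpa using hip 0 1
    · simpa using hox 0
    · have := hip 0 1; simp at this; linarith
    · simpa using hip 1 1
    · simpa using hox 1
    · have := hox 0; linarith
    · have := hox 1; linarith
    · exact hxx
  have hcol : M.transpose * M = 1 := mul_eq_one_comm.mp hrow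
  intro m n
  have h := congrFun (congrFun hcol m) n
  rw [Matrix.mul_apply, Fin.sum_univ_three] at h
  simp only [Matrix.transpose_apply, Matrix.one_apply] at h
  simpa [hM, hb, Fin.sum_univ_three] using h

/-- On the unit 2-sphere, if `f ∈ E_{λ_l}` and `h ∈ E_{λ_r}` are Laplace eigenfunctions
(`Δf = −l(l+1) f`, `Δh = −r(r+1) h`), then for any orthonormal tangent frame `(e_i)`,
`Δ⟨J∇f, ∇h⟩ = −(λ_l + λ_r − 2)⟨J∇f, ∇h⟩ − 2 Σ_{i,j} Hess f(e_i, Je_j) Hess h(e_i, e_j)`. -/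
theorem laplacian_inner_J_grad (F H : E3 → ℝ) (l r : ℕ)
    (hF : ContDiff ℝ (⊤ : ℕ∞) F) (hH : ContDiff ℝ (⊤ : ℕ∞) H)
    (heF : ∀ x ∈ Sph, slap F x = -((l : ℝ) * (l + 1)) * F x)
    (heH : ∀ x ∈ Sph, slap H x = -((r : ℝ) * (r + 1)) * H x) :
    ∀ x ∈ Sph, ∀ e : Fin 2 → E3,
      (∀ i, ⟪e i, x⟫ = 0) →
      (∀ i j, ⟪e i, e j⟫ = if i = j then (1:ℝ) else 0) →
      slap (fun y => ⟪Jop y (sgrad F y), sgrad H y⟫) x =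
        -((l : ℝ) * (l + 1) + (r : ℝ) * (r + 1) - 2) * ⟪Jop x (sgrad F x), sgrad H x⟫
          - 2 * ∑ i, ∑ j, shess F x (e i) (Jop x (e j)) * shess H x (e i) (e j) := by
  intro x hxS e horth hfr
  have hx : x ∈ U3 := sph_ne_zero hxS
  have hC := completeness hxS e horth hfr
  have c00 : e 0 0 * e 0 0 + e 1 0 * e 1 0 + x 0 * x 0 = 1 := by simpa using hC 0 0
  have c01 : e 0 0 * e 0 1 + e 1 0 * e 1 1 + x 0 * x 1 = 0 := by simpa using hC 0 1
  have c02 : e 0 0 * e 0 2 + e 1 0 * e 1 2 + x 0 * x 2 = 0 := by simpa using hC 0 2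
  have c11 : e 0 1 * e 0 1 + e 1 1 * e 1 1 + x 1 * x 1 = 1 := by simpa using hC 1 1
  have c12 : e 0 1 * e 0 2 + e 1 1 * e 1 2 + x 1 * x 2 = 0 := by simpa using hC 1 2
  have c22 : e 0 2 * e 0 2 + e 1 2 * e 1 2 + x 2 * x 2 = 1 := by simpa using hC 2 2
  have hsF10 : D 1 (D 0 (ext0 F)) x = D 0 (D 1 (ext0 F)) x := schwarz (Sm_ext0 hF) hx 1 0
  have hsF20 : D 2 (D 0 (ext0 F)) x = D 0 (D 2 (ext0 F)) x := schwarz (Sm_ext0 hF) hx 2 0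
  have hsF21 : D 2 (D 1 (ext0 F)) x = D 1 (D 2 (ext0 F)) x := schwarz (Sm_ext0 hF) hx 2 1
  have hsH10 : D 1 (D 0 (ext0 H)) x = D 0 (D 1 (ext0 H)) x := schwarz (Sm_ext0 hH) hx 1 0
  have hsH20 : D 2 (D 0 (ext0 H)) x = D 0 (D 2 (ext0 H)) x := schwarz (Sm_ext0 hH) hx 2 0
  have hsH21 : D 2 (D 1 (ext0 H)) x = D 1 (D 2 (ext0 H)) x := schwarz (Sm_ext0 hH) hx 2 1
  have hDF : ∀ k : Fin 3, Hom (D k (ext0 F)) (-1) := by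
    intro k; have := HomD (Sm_ext0 hF) (Hom_ext0 F) k; norm_num at this; exact this
  have hDH : ∀ k : Fin 3, Hom (D k (ext0 H)) (-1) := by
    intro k; have := HomD (Sm_ext0 hH) (Hom_ext0 H) k; norm_num at this; exact this
  have eulF : ∀ k : Fin 3, x 0 * D 0 (D k (ext0 F)) x + x 1 * D 1 (D k (ext0 F)) x
      + x 2 * D 2 (D k (ext0 F)) x = -1 * D k (ext0 F) x := by
    intro k
    have := euler ((Sm_ext0 hF).D k) (hDF k) hx
    rw [Fin.sum_univ_three] at this
    norm_num at this ⊢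
    linarith [this]
  have eulH : ∀ k : Fin 3, x 0 * D 0 (D k (ext0 H)) x + x 1 * D 1 (D k (ext0 H)) x
      + x 2 * D 2 (D k (ext0 H)) x = -1 * D k (ext0 H) x := by
    intro k
    have := euler ((Sm_ext0 hH).D k) (hDH k) hx
    rw [Fin.sum_univ_three] at this
    norm_num at this ⊢
    linarith [this]
  have hg0 : x 0 * D 0 (D 0 (ext0 F)) x + x 1 * D 0 (D 1 (ext0 F)) x
      + x 2 * D 0 (D 2 (ext0 F)) x = -(D 0 (ext0 F) x) := by
    have := eulF 0; rw [hsF10, hsF20] at this; linarith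
  have hg1 : x 0 * D 0 (D 1 (ext0 F)) x + x 1 * D 1 (D 1 (ext0 F)) x
      + x 2 * D 1 (D 2 (ext0 F)) x = -(D 1 (ext0 F) x) := by
    have := eulF 1; rw [hsF21] at this; linarith
  have hg2 : x 0 * D 0 (D 2 (ext0 F)) x + x 1 * D 1 (D 2 (ext0 F)) x
      + x 2 * D 2 (D 2 (ext0 F)) x = -(D 2 (ext0 F) x) := by
    have := eulF 2; linarith
  have hh0 : x 0 * D 0 (D 0 (ext0 H)) x + x 1 * D 0 (D 1 (ext0 H)) x
      + x 2 * D 0 (D 2 (ext0 H)) x = -(D 0 (ext0 H) x) := by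
    have := eulH 0; rw [hsH10, hsH20] at this; linarith
  have hh1 : x 0 * D 0 (D 1 (ext0 H)) x + x 1 * D 1 (D 1 (ext0 H)) x
      + x 2 * D 1 (D 2 (ext0 H)) x = -(D 1 (ext0 H) x) := by
    have := eulH 1; rw [hsH21] at this; linarith
  have hh2 : x 0 * D 0 (D 2 (ext0 H)) x + x 1 * D 1 (D 2 (ext0 H)) x
      + x 2 * D 2 (D 2 (ext0 H)) x = -(D 2 (ext0 H) x) := by
    have := eulH 2; linarith
  rw [slap_inner_eq hF hH hxS, elap_Gf_expand hF hH hx,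
      elap_T hF hH hx 1 2 0, elap_T hF hH hx 2 1 0, elap_T hF hH hx 2 0 1,
      elap_T hF hH hx 0 2 1, elap_T hF hH hx 0 1 2, elap_T hF hH hx 1 0 2,
      elap_Dk hF heF hxS 0, elap_Dk hF heF hxS 1, elap_Dk hF heF hxS 2,
      elap_Dk hH heH hxS 0, elap_Dk hH heH hxS 1, elap_Dk hH heH hxS 2,
      Gf_eq_inner F H x]
  simp only [Fin.sum_univ_two]
  rw [shess_coord hF hx (e 0) (Jop x (e 0)), shess_coord hF hx (e 0) (Jop x (e 1)),
      shess_coord hF hx (e 1) (Jop x (e 0)), shess_coord hF hx (e 1) (Jop x (e 1)),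
      shess_coord hH hx (e 0) (e 0), shess_coord hH hx (e 0) (e 1),
      shess_coord hH hx (e 1) (e 0), shess_coord hH hx (e 1) (e 1)]
  simp only [Fin.sum_univ_three, Gf, cf, Jop_c0, Jop_c1, Jop_c2]
  simp only [hsF10, hsF20, hsF21, hsH10, hsH20, hsH21]
  linear_combination (FIN (x 0) (x 1) (x 2) (e 0 0) (e 0 1) (e 0 2) (e 1 0) (e 1 1) (e 1 2)
    (D 0 (D 0 (ext0 F)) x) (D 0 (D 1 (ext0 F)) x) (D 0 (D 2 (ext0 F)) x)
    (D 1 (D 1 (ext0 F)) x) (D 1 (D 2 (ext0 F)) x) (D 2 (D 2 (ext0 F)) x)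
    (D 0 (D 0 (ext0 H)) x) (D 0 (D 1 (ext0 H)) x) (D 0 (D 2 (ext0 H)) x)
    (D 1 (D 1 (ext0 H)) x) (D 1 (D 2 (ext0 H)) x) (D 2 (D 2 (ext0 H)) x)
    (D 0 (ext0 F) x) (D 1 (ext0 F) x) (D 2 (ext0 F) x)
    (D 0 (ext0 H) x) (D 1 (ext0 H) x) (D 2 (ext0 H) x)
    (ext0 F x) (ext0 H x) ((l : ℝ) * (l + 1)) ((r : ℝ) * (r + 1))
    hg0 hg1 hg2 hh0 hh1 hh2 c00 c01 c02 c11 c12 c22)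
end
end

section
/- If P : ℝ³ → ℝ is a homogeneous polynomial of degree l, then ∫_{S²} P dM = (1/(l(l+1))) ∫_{S²} Δ⁰P dM, where Δ⁰ is the Euclidean Laplacian on ℝ³. In particular, for a multi-index a = (a₁,a₂,a₃) with |a| = l, ∫_{S²} φ^a dM = Σ_i (a_i(a_i−1)/(l(l+1))) ∫_{S²} φ^{a−2ε_i} dM. -/
open MeasureTheory Real
open scoped RealInnerProductSpace

noncomputable section

/-!
Integrate `x^a e^{-‖x‖²}` over `ℝⁿ` in two ways. By Fubini it is `∏ᵢ G(aᵢ)` with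
`G(m) = ∫ t^m e^{-t²} dt`; in polar coordinates it is `(∫_{S^{n-1}} x^a) · R(|a| + n - 1)`
with `R(m) = ∫₀^∞ r^m e^{-r²} dr = Γ((m+1)/2)/2`. Both moments satisfy
`M(m+2) = (m+1)/2 · M(m)`, so `m(m-1) G(m-2) = 2m G(m)` turns into
`|a|(|a|+n-2) ∫ x^a = Σᵢ aᵢ(aᵢ-1) ∫ x^{a-2εᵢ}` on the sphere. Summing over the monomials
of a homogeneous `P` gives the Laplacian form.
-/

open Set Metric Module

def halfGaussianMoment (m : ℕ) : ℝ := ∫ t in Ioi (0 : ℝ), t ^ m * exp (-t ^ 2)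

def gaussianMoment (m : ℕ) : ℝ := ∫ t : ℝ, t ^ m * exp (-t ^ 2)

theorem halfGaussianMoment_eq_Gamma (m : ℕ) :
    halfGaussianMoment m = Gamma ((m + 1) / 2) / 2 := by
  have h := integral_rpow_mul_exp_neg_rpow (p := 2) (q := m) two_pos
    (neg_one_lt_zero.trans_le m.cast_nonneg)
  simp only [rpow_natCast, rpow_two] at h
  rw [halfGaussianMoment, h]
  ring

theorem halfGaussianMoment_pos (m : ℕ) : 0 < halfGaussianMoment m := by
  rw [halfGaussianMoment_eq_Gamma]
  exact half_pos (Gamma_pos_of_pos (by positivity))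

theorem halfGaussianMoment_add_two (m : ℕ) :
    halfGaussianMoment (m + 2) = (m + 1) / 2 * halfGaussianMoment m := by
  rw [halfGaussianMoment_eq_Gamma, halfGaussianMoment_eq_Gamma, Nat.cast_add, Nat.cast_two,
    show ((m : ℝ) + 2 + 1) / 2 = (m + 1) / 2 + 1 by ring, Gamma_add_one (by positivity)]
  ring

theorem integrable_pow_mul_exp_neg_sq (m : ℕ) :
    Integrable (fun t : ℝ => t ^ m * exp (-t ^ 2)) := by
  simpa [rpow_natCast] using integrable_rpow_mul_exp_neg_mul_sq (b := 1) one_pos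
    (s := m) (neg_one_lt_zero.trans_le m.cast_nonneg)

theorem gaussianMoment_eq (m : ℕ) :
    gaussianMoment m = (1 + (-1) ^ m) * halfGaussianMoment m := by
  have hint := integrable_pow_mul_exp_neg_sq m
  rw [gaussianMoment,
    ← intervalIntegral.integral_Iic_add_Ioi (b := 0) hint.integrableOn hint.integrableOn,
    ← neg_zero, ← integral_comp_neg_Ioi, neg_zero, halfGaussianMoment, add_mul, one_mul,
    ← integral_const_mul, add_comm]
  congr 1
  refine setIntegral_congr_fun measurableSet_Ioi fun t _ => ?_
  rw [neg_pow, neg_sq]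
  ring

theorem gaussianMoment_add_two (m : ℕ) :
    gaussianMoment (m + 2) = (m + 1) / 2 * gaussianMoment m := by
  rw [gaussianMoment_eq, gaussianMoment_eq, halfGaussianMoment_add_two, pow_add]
  ring

theorem gaussianMoment_one : gaussianMoment 1 = 0 := by
  simp [gaussianMoment_eq]

theorem mul_sub_one_mul_gaussianMoment_sub_two (m : ℕ) :
    (m : ℝ) * (m - 1) * gaussianMoment (m - 2) = 2 * m * gaussianMoment m := by
  match m with
  | 0 => simp
  | 1 => simp [gaussianMoment_one]
  | k + 2 =>
    rw [Nat.add_sub_cancel, gaussianMoment_add_two]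
    push_cast
    ring

theorem natCast_mul_natCast_sub_one_eq_zero {m : ℕ} (hm : m < 2) : (m : ℝ) * (m - 1) = 0 := by
  interval_cases m <;> norm_num

theorem integral_volumeIoiPow (n : ℕ) (g : ℝ → ℝ) :
    ∫ r : Ioi (0 : ℝ), g r ∂Measure.volumeIoiPow n = ∫ r in Ioi (0 : ℝ), r ^ n * g r := by
  simp only [Measure.volumeIoiPow, ENNReal.ofReal]
  rw [integral_withDensity_eq_integral_smul (measurable_subtype_coe.pow_const _).real_toNNReal,
    integral_subtype_comap measurableSet_Ioi fun r => (r ^ n).toNNReal • g r]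
  refine setIntegral_congr_fun measurableSet_Ioi fun r hr => ?_
  rw [NNReal.smul_def, Real.coe_toNNReal _ (pow_nonneg (le_of_lt hr) _), smul_eq_mul]

theorem integral_fun_normalize_mul_fun_norm_addHaar {E : Type*} [NormedAddCommGroup E]
    [NormedSpace ℝ E] [Nontrivial E] [FiniteDimensional ℝ E] [MeasurableSpace E] [BorelSpace E]
    (μ : Measure E) [μ.IsAddHaarMeasure] (f : E → ℝ) (g : ℝ → ℝ) :
    ∫ x, f (‖x‖⁻¹ • x) * g ‖x‖ ∂μ =
      (∫ ω : sphere (0 : E) 1, f ω ∂μ.toSphere) *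
        ∫ r in Ioi (0 : ℝ), r ^ (finrank ℝ E - 1) * g r := by
  calc ∫ x, f (‖x‖⁻¹ • x) * g ‖x‖ ∂μ
      = ∫ x : ({0}ᶜ : Set E), f (‖x.1‖⁻¹ • x.1) * g ‖x.1‖ ∂μ.comap (↑) := by
        rw [integral_subtype_comap (measurableSet_singleton _).compl
          fun x => f (‖x‖⁻¹ • x) * g ‖x‖, restrict_compl_singleton]
    _ = ∫ p, f p.1 * g p.2 ∂μ.toSphere.prod (.volumeIoiPow (finrank ℝ E - 1)) := by
        simpa using μ.measurePreserving_homeomorphUnitSphereProd.integral_comp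
          (Homeomorph.measurableEmbedding _) fun p => f p.1 * g p.2
    _ = _ := by
        rw [integral_prod_mul (fun ω : sphere (0 : E) 1 => f ω) fun r : Ioi (0 : ℝ) => g r,
          integral_volumeIoiPow]

section Euclidean

variable {ι : Type*} [Fintype ι]

def sphereMoment (a : ι → ℕ) : ℝ :=
  ∫ ω : sphere (0 : EuclideanSpace ℝ ι) 1, ∏ i, (ω : EuclideanSpace ℝ ι) i ^ a i
    ∂(volume : Measure (EuclideanSpace ℝ ι)).toSphere

theorem integral_prod_pow_mul_exp_neg_norm_sq (a : ι → ℕ) :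
    ∫ x : EuclideanSpace ℝ ι, (∏ i, x i ^ a i) * exp (-‖x‖ ^ 2) =
      ∏ i, gaussianMoment (a i) := by
  have hsplit : ∀ x : EuclideanSpace ℝ ι,
      (∏ i, x i ^ a i) * exp (-‖x‖ ^ 2) = ∏ i, (x i ^ a i * exp (-x i ^ 2)) := fun x => by
    rw [EuclideanSpace.norm_sq_eq, Finset.prod_mul_distrib, ← Finset.sum_neg_distrib, exp_sum]
    simp only [Real.norm_eq_abs, sq_abs]
  simp_rw [hsplit]
  rw [← (PiLp.volume_preserving_toLp ι).integral_comp
    (MeasurableEquiv.toLp 2 (ι → ℝ)).measurableEmbedding]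
  exact integral_fintype_prod_eq_prod fun i (t : ℝ) => t ^ a i * exp (-t ^ 2)

theorem prod_pow_eq_norm_pow_mul_prod_pow_normalize {x : EuclideanSpace ℝ ι} (hx : x ≠ 0)
    (a : ι → ℕ) : ∏ i, x i ^ a i = ‖x‖ ^ (∑ i, a i) * ∏ i, (‖x‖⁻¹ • x) i ^ a i := by
  rw [← Finset.prod_pow_eq_pow_sum, ← Finset.prod_mul_distrib]
  refine Finset.prod_congr rfl fun i _ => ?_
  rw [← mul_pow, PiLp.smul_apply, smul_eq_mul, mul_inv_cancel_left₀ (norm_ne_zero_iff.mpr hx)]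

theorem sphereMoment_mul_halfGaussianMoment [Nonempty ι] (a : ι → ℕ) :
    sphereMoment a * halfGaussianMoment (∑ i, a i + (Fintype.card ι - 1)) =
      ∏ i, gaussianMoment (a i) := by
  have polar := integral_fun_normalize_mul_fun_norm_addHaar
    (volume : Measure (EuclideanSpace ℝ ι)) (fun x => ∏ i, x i ^ a i)
    fun r => r ^ (∑ i, a i) * exp (-r ^ 2)
  rw [finrank_euclideanSpace] at polar
  calc sphereMoment a * halfGaussianMoment (∑ i, a i + (Fintype.card ι - 1))
      = ∫ x : EuclideanSpace ℝ ι,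
          (∏ i, (‖x‖⁻¹ • x) i ^ a i) * (‖x‖ ^ (∑ i, a i) * exp (-‖x‖ ^ 2)) := by
        rw [polar, sphereMoment, halfGaussianMoment]
        congr 1
        refine integral_congr_ae (Filter.Eventually.of_forall fun r => ?_)
        simp only [pow_add]
        ring
    _ = ∫ x : EuclideanSpace ℝ ι, (∏ i, x i ^ a i) * exp (-‖x‖ ^ 2) := by
        refine integral_congr_ae ?_
        filter_upwards [Measure.ae_ne volume 0] with x hx
        rw [prod_pow_eq_norm_pow_mul_prod_pow_normalize hx]
        ring
    _ = ∏ i, gaussianMoment (a i) := integral_prod_pow_mul_exp_neg_norm_sq a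

end Euclidean

section Recursion

variable {ι : Type*} [Fintype ι] [DecidableEq ι]

theorem mul_sub_one_mul_prod_gaussianMoment_sub_single (a : ι → ℕ) (i : ι) :
    (a i : ℝ) * (a i - 1) * ∏ j, gaussianMoment ((a - Pi.single i 2 : ι → ℕ) j) =
      2 * a i * ∏ j, gaussianMoment (a j) := by
  have hcompl : ∏ j ∈ {i}ᶜ, gaussianMoment ((a - Pi.single i 2 : ι → ℕ) j) =
      ∏ j ∈ {i}ᶜ, gaussianMoment (a j) :=
    Finset.prod_congr rfl fun j hj => by
      rw [Pi.sub_apply, Pi.single_eq_of_ne (by simpa using hj), tsub_zero]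
  rw [Fintype.prod_eq_mul_prod_compl i, Fintype.prod_eq_mul_prod_compl i (fun j => _), hcompl,
    Pi.sub_apply, Pi.single_eq_same, ← mul_assoc, mul_sub_one_mul_gaussianMoment_sub_two,
    mul_assoc]

theorem sum_mul_sub_one_mul_prod_gaussianMoment_sub_single (a : ι → ℕ) :
    ∑ i, (a i : ℝ) * (a i - 1) * ∏ j, gaussianMoment ((a - Pi.single i 2 : ι → ℕ) j) =
      2 * (∑ i, a i : ℕ) * ∏ j, gaussianMoment (a j) := by
  simp_rw [mul_sub_one_mul_prod_gaussianMoment_sub_single, ← Finset.sum_mul, ← Finset.mul_sum]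
  push_cast
  rfl

theorem sum_sub_single_two {a : ι → ℕ} {i : ι} (h : 2 ≤ a i) :
    ∑ j, ((a - Pi.single i 2 : ι → ℕ) j) = ∑ j, a j - 2 := by
  simp_rw [Pi.sub_apply]
  rw [Finset.sum_tsub_distrib, Finset.sum_pi_single' i 2, if_pos (Finset.mem_univ i)]
  intro j _
  rcases eq_or_ne j i with rfl | hj
  · simpa using h
  · simp [hj]

theorem mul_sphereMoment_eq_sum [Nonempty ι] (a : ι → ℕ) :
    ((∑ i, a i : ℕ) : ℝ) * ((∑ i, a i : ℕ) + Fintype.card ι - 2) * sphereMoment a =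
      ∑ i, (a i : ℝ) * (a i - 1) * sphereMoment (a - Pi.single i 2) := by
  set l := ∑ i, a i
  have hG := sum_mul_sub_one_mul_prod_gaussianMoment_sub_single a
  have hR := sphereMoment_mul_halfGaussianMoment a
  rcases lt_or_ge l 2 with hl | hl
  · have hcoef (i : ι) : (a i : ℝ) * (a i - 1) = 0 :=
      natCast_mul_natCast_sub_one_eq_zero
        ((Finset.single_le_sum (fun _ _ => Nat.zero_le _) (Finset.mem_univ i)).trans_lt hl)
    simp only [hcoef, zero_mul, Finset.sum_const_zero] at hG ⊢
    rw [← hR] at hG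
    have hlS : (l : ℝ) * sphereMoment a = 0 :=
      (mul_eq_zero.mp (by linear_combination -hG)).resolve_right
        (mul_pos two_pos (halfGaussianMoment_pos (l + (Fintype.card ι - 1)))).ne'
    rw [mul_right_comm, hlS, zero_mul]
  · -- `k` is the radial exponent `|a - 2εᵢ| + n - 1` of the lowered monomials
    obtain ⟨k, hk⟩ : ∃ k, l + (Fintype.card ι - 1) = k + 2 :=
      ⟨l + (Fintype.card ι - 1) - 2, by omega⟩
    have hk' : (l : ℝ) + Fintype.card ι - 2 = k + 1 := by
      have : ((l + (Fintype.card ι - 1) : ℕ) : ℝ) = k + 2 := by exact_mod_cast hk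
      rw [Nat.cast_add, Nat.cast_sub Fintype.card_pos, Nat.cast_one] at this
      linarith
    have hterm (i : ι) :
        (a i : ℝ) * (a i - 1) * sphereMoment (a - Pi.single i 2) * halfGaussianMoment k =
          (a i : ℝ) * (a i - 1) * ∏ j, gaussianMoment ((a - Pi.single i 2 : ι → ℕ) j) := by
      rcases lt_or_ge (a i) 2 with hi | hi
      · simp [natCast_mul_natCast_sub_one_eq_zero hi]
      · rw [mul_assoc, ← sphereMoment_mul_halfGaussianMoment, sum_sub_single_two hi]
        congr 3
        omega
    refine mul_right_cancel₀ (halfGaussianMoment_pos k).ne' ?_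
    rw [Finset.sum_mul]
    simp_rw [hterm]
    rw [hG, ← hR, hk, halfGaussianMoment_add_two, hk']
    ring

end Recursion

namespace MvPolynomial

section Laplacian

variable {R : Type*} [CommRing R] {ι : Type*} [Fintype ι]

def laplacian : MvPolynomial ι R →ₗ[R] MvPolynomial ι R :=
  ∑ i, (pderiv i).toLinearMap ∘ₗ (pderiv i).toLinearMap

theorem laplacian_apply (P : MvPolynomial ι R) :
    laplacian P = ∑ i, pderiv i (pderiv i P) := by
  simp [laplacian]

theorem laplacian_monomial (d : ι →₀ ℕ) (c : R) :
    laplacian (monomial d c) =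
      ∑ i, monomial (d - Finsupp.single i 2) (c * d i * (d i - 1)) := by
  rw [laplacian_apply]
  refine Finset.sum_congr rfl fun i _ => ?_
  rw [pderiv_monomial, pderiv_monomial, tsub_tsub, ← Finsupp.single_add, Finsupp.tsub_apply,
    Finsupp.single_eq_same]
  rcases Nat.eq_zero_or_pos (d i) with h | h
  · simp [h]
  · rw [Nat.cast_sub h, Nat.cast_one]

end Laplacian

end MvPolynomial

section SphereIntegral

open MvPolynomial

variable {ι : Type*} [Fintype ι]

theorem integrable_eval_sphere (P : MvPolynomial ι ℝ) :
    Integrable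
      (fun ω : sphere (0 : EuclideanSpace ℝ ι) 1 => eval (fun i => (ω : EuclideanSpace ℝ ι) i) P)
      (volume : Measure (EuclideanSpace ℝ ι)).toSphere :=
  (continuous_eval P |>.comp ((PiLp.continuous_ofLp 2 _).comp continuous_subtype_val))
    |>.integrable_of_hasCompactSupport (HasCompactSupport.of_compactSpace _)

def sphereIntegral : MvPolynomial ι ℝ →ₗ[ℝ] ℝ where
  toFun P :=
    ∫ ω : sphere (0 : EuclideanSpace ℝ ι) 1, eval (fun i => (ω : EuclideanSpace ℝ ι) i) P
      ∂(volume : Measure (EuclideanSpace ℝ ι)).toSphere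
  map_add' P Q := by
    simp only [map_add]
    exact integral_add (integrable_eval_sphere P) (integrable_eval_sphere Q)
  map_smul' c P := by
    simp only [smul_eval, RingHom.id_apply, smul_eq_mul, integral_const_mul]

theorem sphereIntegral_monomial (d : ι →₀ ℕ) (c : ℝ) :
    sphereIntegral (monomial d c) = c * sphereMoment ⇑d := by
  simp only [sphereIntegral, LinearMap.coe_mk, AddHom.coe_mk, eval_monomial,
    Finsupp.prod_fintype _ _ fun _ => pow_zero _, integral_const_mul, sphereMoment]

theorem mul_sphereIntegral_eq_sphereIntegral_laplacian [Nonempty ι] [DecidableEq ι] {l : ℕ}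
    {P : MvPolynomial ι ℝ} (hP : P.IsHomogeneous l) :
    (l : ℝ) * (l + Fintype.card ι - 2) * sphereIntegral P = sphereIntegral (laplacian P) := by
  rw [P.as_sum, map_sum, map_sum, map_sum, Finset.mul_sum]
  refine Finset.sum_congr rfl fun d hd => ?_
  have hdeg : ∑ i, d i = l := by
    rw [← hP (mem_support_iff.mp hd), Finsupp.weight_apply,
      Finsupp.sum_fintype _ _ fun _ => by simp]
    simp
  simp only [laplacian_monomial, map_sum, sphereIntegral_monomial, Finsupp.coe_tsub,
    Finsupp.single_eq_pi_single]
  rw [← hdeg, mul_left_comm, mul_sphereMoment_eq_sum, Finset.mul_sum]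
  refine Finset.sum_congr rfl fun i _ => ?_
  ring

end SphereIntegral

open MvPolynomial in
/-- If `P : ℝ³ → ℝ` is a homogeneous polynomial of degree `l`, then
`∫_{S²} P dM = (1/(l(l+1))) ∫_{S²} Δ⁰P dM` where `Δ⁰` is the Euclidean Laplacian;
in particular for a monomial `φ^a` with `|a| = l`,
`∫_{S²} φ^a dM = Σ_i (a_i(a_i−1)/(l(l+1))) ∫_{S²} φ^{a−2ε_i} dM` (with the convention
that terms with `a_i < 2` vanish). -/
theorem integral_homogeneous_polynomial_sphere (l : ℕ) (hl : 0 < l) :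
    (∀ P : MvPolynomial (Fin 3) ℝ, P.IsHomogeneous l →
      ∫ x : Metric.sphere (0 : E3) 1, eval (fun i => (x : E3) i) P ∂μS =
        (1 / ((l : ℝ) * (l + 1))) *
          ∫ x : Metric.sphere (0 : E3) 1,
            eval (fun i => (x : E3) i) (∑ i, pderiv i (pderiv i P)) ∂μS) ∧
    (∀ a : Fin 3 → ℕ, (∑ i, a i) = l →
      ∫ x : Metric.sphere (0 : E3) 1, ∏ i, ((x : E3) i) ^ (a i) ∂μS =
        ∑ i, ((a i : ℝ) * ((a i : ℝ) - 1) / ((l : ℝ) * (l + 1))) *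
          ∫ x : Metric.sphere (0 : E3) 1,
            ∏ j, ((x : E3) j) ^ (a j - 2 * (if j = i then 1 else 0)) ∂μS) := by
  have hl' : (l : ℝ) * (l + 1) ≠ 0 := by positivity
  have hdim : (l : ℝ) + Fintype.card (Fin 3) - 2 = l + 1 := by
    rw [Fintype.card_fin]
    ring
  refine ⟨fun P hP => ?_, fun a ha => ?_⟩
  · have h := mul_sphereIntegral_eq_sphereIntegral_laplacian hP
    rw [hdim, laplacian_apply] at h
    change sphereIntegral P = _ * sphereIntegral (∑ i, pderiv i (pderiv i P))
    rw [← h]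
    field_simp
  · have h := mul_sphereMoment_eq_sum a
    rw [ha, hdim] at h
    have hsub (i : Fin 3) : (fun j => a j - 2 * if j = i then 1 else 0) = a - Pi.single i 2 := by
      ext j
      rcases eq_or_ne j i with rfl | hj <;> simp [*]
    change sphereMoment a = ∑ i, _ * sphereMoment (fun j => a j - 2 * if j = i then 1 else 0)
    simp_rw [hsub, div_mul_eq_mul_div, ← Finset.sum_div, ← h]
    field_simp
end
end

section
/- On the unit 2-sphere, for multi-indices a, b with |a| = |b| = l, one has ∫_{S²}⟨∇φ^a, ∇φ^b⟩ dM = −l² ∫_{S²} φ^{a+b} dM + Σ_i a_i b_i ∫_{S²} φ^{a+b−2ε_i} dM. -/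
open MeasureTheory Real
open scoped RealInnerProductSpace

noncomputable section

/-! On the unit sphere the gradient of `y ↦ F (y / ‖y‖)` is the tangential part
`∇F - ⟪∇F, x⟫ x` of the Euclidean gradient, so
`⟪∇ₛφ^a, ∇ₛφ^b⟫ = ⟪∇φ^a, ∇φ^b⟫ - ⟪∇φ^a, x⟫ ⟪∇φ^b, x⟫`.
Since `∂ᵢφ^a = aᵢ φ^(a - εᵢ)`, the first term is `∑ᵢ aᵢ bᵢ φ^(a + b - 2εᵢ)`, and by Euler's identity
`⟪∇φ^a, x⟫ = l φ^a` the second is `l² φ^(a + b)`. Integrating this pointwise identity over the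
sphere gives the theorem. -/

/-- `∂(x^a)/∂xᵢ`; the truncated subtraction in the exponent only matters when `a i = 0`, where the
factor `a i` kills the term. -/
def monomialPartial {ι R : Type*} [Fintype ι] [DecidableEq ι] [CommSemiring R] (a : ι → ℕ)
    (x : ι → R) (i : ι) : R :=
  a i * ∏ j, x j ^ (a j - if j = i then 1 else 0)

section Monomial

variable {ι R : Type*} [Fintype ι]

theorem prod_pow_mul_prod_pow_of_add_eq [CommMonoid R] (x : ι → R) {e f g : ι → ℕ}
    (h : ∀ j, e j + f j = g j) : (∏ j, x j ^ e j) * ∏ j, x j ^ f j = ∏ j, x j ^ g j := by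
  rw [← Finset.prod_mul_distrib]
  exact Finset.prod_congr rfl fun j _ => by rw [← pow_add, h]

variable [DecidableEq ι] [CommSemiring R]

theorem monomialPartial_eq_mul_prod_erase (a : ι → ℕ) (x : ι → R) (i : ι) :
    monomialPartial a x i = a i * (x i ^ (a i - 1) * ∏ j ∈ Finset.univ.erase i, x j ^ a j) := by
  rw [monomialPartial, ← Finset.mul_prod_erase _ _ (Finset.mem_univ i), if_pos rfl]
  congr 2
  exact Finset.prod_congr rfl fun j hj => by rw [if_neg (Finset.ne_of_mem_erase hj), Nat.sub_zero]

theorem monomialPartial_mul_self (a : ι → ℕ) (x : ι → R) (i : ι) :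
    monomialPartial a x i * x i = a i * ∏ j, x j ^ a j := by
  rcases eq_or_ne (a i) 0 with hi | hi
  · simp [monomialPartial, hi]
  have hxi : x i = ∏ j, x j ^ (if j = i then 1 else 0) := by simp [pow_ite]
  rw [monomialPartial, mul_assoc, hxi, prod_pow_mul_prod_pow_of_add_eq]
  intro j
  split_ifs with hj
  · subst hj; omega
  · omega

theorem monomialPartial_mul_monomialPartial (a b : ι → ℕ) (x : ι → R) (i : ι) :
    monomialPartial a x i * monomialPartial b x i =
      a i * b i * ∏ j, x j ^ (a j + b j - 2 * if j = i then 1 else 0) := by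
  rcases eq_or_ne (a i) 0 with ha | ha
  · simp [monomialPartial, ha]
  rcases eq_or_ne (b i) 0 with hb | hb
  · simp [monomialPartial, hb]
  rw [monomialPartial, monomialPartial, mul_mul_mul_comm, prod_pow_mul_prod_pow_of_add_eq]
  intro j
  split_ifs with hj
  · subst hj; omega
  · omega

end Monomial

section Normalize

variable {E : Type*} [NormedAddCommGroup E] [InnerProductSpace ℝ E] {x : E}

theorem hasFDerivAt_inv_norm_smul_self (hx : ‖x‖ = 1) :
    HasFDerivAt (fun y : E => ‖y‖⁻¹ • y)
      (ContinuousLinearMap.id ℝ E - (innerSL ℝ x).smulRight x) x := by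
  have hnorm : HasFDerivAt (fun y : E => ‖y‖) (innerSL ℝ x) x := by
    have h := (hasStrictFDerivAt_norm_sq x).hasFDerivAt.sqrt (by simp [hx])
    rw [hx, one_pow, Real.sqrt_one, mul_one, ← Nat.cast_smul_eq_nsmul ℝ, smul_smul,
      Nat.cast_ofNat, one_div_mul_cancel two_ne_zero, one_smul] at h
    simpa using h
  have hinv := ((hasDerivAt_inv (by simp [hx])).comp_hasFDerivAt x hnorm).smul (hasFDerivAt_id x)
  refine hinv.congr_fderiv ?_
  ext v
  simp [hx, sub_eq_add_neg]

theorem HasGradientAt.comp_inv_norm_smul_self [CompleteSpace E] {F : E → ℝ} {g : E}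
    (hF : HasGradientAt F g x) (hx : ‖x‖ = 1) :
    HasGradientAt (fun y => F (‖y‖⁻¹ • y)) (g - ⟪g, x⟫ • x) x := by
  rw [hasGradientAt_iff_hasFDerivAt] at hF ⊢
  have hF' : HasFDerivAt F (InnerProductSpace.toDual ℝ E g) (‖x‖⁻¹ • x) := by
    rwa [hx, inv_one, one_smul]
  refine (hF'.comp (f := fun y : E => ‖y‖⁻¹ • y) x
    (hasFDerivAt_inv_norm_smul_self hx)).congr_fderiv ?_
  ext v
  simp [real_inner_comm, mul_comm]

theorem inner_sub_inner_smul_self_of_norm_eq_one (hx : ‖x‖ = 1) (u w : E) :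
    ⟪u - ⟪u, x⟫ • x, w - ⟪w, x⟫ • x⟫ = ⟪u, w⟫ - ⟪u, x⟫ * ⟪w, x⟫ := by
  simp only [inner_sub_left, inner_sub_right, inner_smul_left, inner_smul_right,
    real_inner_self_eq_norm_sq, hx, real_inner_comm x, conj_trivial]
  ring

end Normalize

theorem sgrad_eq_of_hasGradientAt {n : ℕ} {F : EuclideanSpace ℝ (Fin n) → ℝ}
    {g x : EuclideanSpace ℝ (Fin n)} (hF : HasGradientAt F g x) (hx : ‖x‖ = 1) :
    sgrad F x = g - ⟪g, x⟫ • x :=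
  (hF.comp_inv_norm_smul_self hx).gradient

section EuclideanMonomial

variable {ι : Type*} [Fintype ι]

theorem hasGradientAt_prod_pow [DecidableEq ι] (a : ι → ℕ) (x : EuclideanSpace ℝ ι) :
    HasGradientAt (fun y : EuclideanSpace ℝ ι => ∏ i, y i ^ a i)
      (WithLp.toLp 2 (monomialPartial a x.ofLp)) x := by
  rw [hasGradientAt_iff_hasFDerivAt]
  refine (HasFDerivAt.finsetProd (g := fun i (y : EuclideanSpace ℝ ι) => y i ^ a i)
    fun i _ => (hasDerivAt_pow (a i) (x i)).comp_hasFDerivAt x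
      (EuclideanSpace.proj (𝕜 := ℝ) i).hasFDerivAt).congr_fderiv ?_
  ext v
  simp only [sum_apply, smul_apply, PiLp.proj_apply, smul_eq_mul,
    InnerProductSpace.toDual_apply_apply, PiLp.inner_apply, RCLike.inner_apply, conj_trivial,
    monomialPartial_eq_mul_prod_erase]
  exact Finset.sum_congr rfl fun i _ => by ring

theorem inner_toLp_monomialPartial_self [DecidableEq ι] (a : ι → ℕ) (x : EuclideanSpace ℝ ι) :
    ⟪WithLp.toLp 2 (monomialPartial a x.ofLp), x⟫ = (∑ i, a i : ℕ) * ∏ i, x i ^ a i := by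
  simp [PiLp.inner_apply, mul_comm (x _), monomialPartial_mul_self, Finset.sum_mul]

theorem inner_toLp_monomialPartial [DecidableEq ι] (a b : ι → ℕ) (x : EuclideanSpace ℝ ι) :
    ⟪WithLp.toLp 2 (monomialPartial a x.ofLp), WithLp.toLp 2 (monomialPartial b x.ofLp)⟫ =
      ∑ i, (a i : ℝ) * b i * ∏ j, x j ^ (a j + b j - 2 * if j = i then 1 else 0) := by
  simp [PiLp.inner_apply, mul_comm (monomialPartial b _ _), monomialPartial_mul_monomialPartial]

theorem integrable_prod_pow_coe_sphere {μ : Measure (Metric.sphere (0 : EuclideanSpace ℝ ι) 1)}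
    [IsFiniteMeasure μ] (k : ι → ℕ) :
    Integrable (fun x : Metric.sphere (0 : EuclideanSpace ℝ ι) 1 =>
      ∏ j, (x : EuclideanSpace ℝ ι) j ^ k j) μ :=
  (continuous_finsetProd _ fun j _ =>
    ((EuclideanSpace.proj (𝕜 := ℝ) j).continuous.comp continuous_subtype_val).pow _
    ).integrable_of_hasCompactSupport (HasCompactSupport.of_compactSpace _)

end EuclideanMonomial

theorem inner_sgrad_prod_pow {n : ℕ} (a b : Fin n → ℕ) {x : EuclideanSpace ℝ (Fin n)}
    (hx : ‖x‖ = 1) :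
    ⟪sgrad (fun y => ∏ i, y i ^ a i) x, sgrad (fun y => ∏ i, y i ^ b i) x⟫ =
      -((∑ i, a i : ℕ) * (∑ i, b i : ℕ) : ℝ) * ∏ i, x i ^ (a i + b i) +
        ∑ i, (a i : ℝ) * b i * ∏ j, x j ^ (a j + b j - 2 * if j = i then 1 else 0) := by
  rw [sgrad_eq_of_hasGradientAt (hasGradientAt_prod_pow a x) hx,
    sgrad_eq_of_hasGradientAt (hasGradientAt_prod_pow b x) hx,
    inner_sub_inner_smul_self_of_norm_eq_one hx, inner_toLp_monomialPartial,
    inner_toLp_monomialPartial_self, inner_toLp_monomialPartial_self,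
    ← prod_pow_mul_prod_pow_of_add_eq x fun _ => rfl]
  ring

instance : IsFiniteMeasure μS := by
  unfold μS
  infer_instance

/-- On the unit 2-sphere, for multi-indices `a, b` with `|a| = |b| = l`,
`∫_{S²} ⟨∇φ^a, ∇φ^b⟩ dM = −l² ∫_{S²} φ^{a+b} dM + Σ_i a_i b_i ∫_{S²} φ^{a+b−2ε_i} dM`
(terms with negative multi-index entries vanish). -/
theorem integral_inner_grad_monomials (l : ℕ) (a b : Fin 3 → ℕ)
    (ha : (∑ i, a i) = l) (hb : (∑ i, b i) = l) :
    ∫ x : Metric.sphere (0 : E3) 1,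
        ⟪sgrad (fun y => ∏ i, (y i) ^ (a i)) (x : E3),
          sgrad (fun y => ∏ i, (y i) ^ (b i)) (x : E3)⟫ ∂μS =
      -(l : ℝ) ^ 2 *
          ∫ x : Metric.sphere (0 : E3) 1, ∏ i, ((x : E3) i) ^ (a i + b i) ∂μS +
        ∑ i, (a i : ℝ) * (b i : ℝ) *
          ∫ x : Metric.sphere (0 : E3) 1,
            ∏ j, ((x : E3) j) ^ (a j + b j - 2 * (if j = i then 1 else 0)) ∂μS := by
  have hmon := integrable_prod_pow_coe_sphere (μ := μS)
  simp_rw [inner_sgrad_prod_pow a b (norm_eq_of_mem_sphere _), ha, hb]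
  rw [integral_add ((hmon _).const_mul _)
      (integrable_finsetSum _ fun i _ => (hmon _).const_mul _),
    integral_const_mul, integral_finsetSum _ fun i _ => (hmon _).const_mul _]
  simp_rw [integral_const_mul]
  ring
end
end
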